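/- Let Y be a directed graph viewed as a functor Δ_G^op → Set, and let h: Δ_G → Δ_> send V ↦ [0], E₂ ↦ [1]. Then the right adjoint ∀_h(Y) of restriction, evaluated at [n], is naturally in bijection with the set of functions x: {0,…,n} → Y_V together with, for each pair 0 ≤ i < j ≤ n, an edge e_{ij} ∈ Y_E whose source is x(i) and target is x(j); i.e., the n-simplices of ∀_h(Y) are the (n+1)-cliques (with chosen edges) in Y. -/

import Mathlib

open CategoryTheory CategoryTheory.Limits

/-- The category Δ_> of nonempty finite ordinals `[n] = {0, …, n}` with strictly
increasing maps. -/
def DeltaInj : Type := ℕ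

instance : Category DeltaInj where
  Hom m n := { f : Fin ((show ℕ from m) + 1) → Fin ((show ℕ from n) + 1) // StrictMono f }
  id _ := ⟨id, fun _ _ h => h⟩
  comp f g := ⟨g.1 ∘ f.1, g.2.comp f.2⟩

/-- The functor `Δ_G ⥤ Δ_>` sending `V ↦ [0]`, `E₂ ↦ [1]`, and the two morphisms
`V → E₂` to the two strictly increasing maps `[0] → [1]`.  (Δ_G, the category
with objects `V`, `E₂` and exactly two non-identity morphisms `V → E₂`, is the
walking parallel pair, with `zero = V` and `one = E₂`.) -/
def graphToDeltaInj : WalkingParallelPair ⥤ DeltaInj where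
  obj X := match X with
    | .zero => (show DeltaInj from (0 : ℕ))
    | .one => (show DeltaInj from (1 : ℕ))
  map {X Y} f := match X, Y, f with
    | .zero, .zero, _ => 𝟙 _
    | .one, .one, _ => 𝟙 _
    | .zero, .one, .left => ⟨Fin.succAbove 1, Fin.strictMono_succAbove 1⟩
    | .zero, .one, .right => ⟨Fin.succAbove 0, Fin.strictMono_succAbove 0⟩
  map_id X := by cases X <;> rfl
  map_comp {X Y Z} f g := by
    cases X <;> cases Y <;> cases Z <;> (change WalkingParallelPairHom _ _ at f g) <;> cases f <;> cases g <;> exact Subtype.ext (funext fun x => rfl)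

/-- The restriction functor `R_h : Set^(Δ_>^op) ⥤ Set^(Δ_G^op)`, precomposition
with `h^op`, where `h : Δ_G ⥤ Δ_>` sends `V ↦ [0]`, `E₂ ↦ [1]`. -/
def Rh : (DeltaInjᵒᵖ ⥤ Type) ⥤ (WalkingParallelPairᵒᵖ ⥤ Type) :=
  (Functor.whiskeringLeft WalkingParallelPairᵒᵖ DeltaInjᵒᵖ Type).obj graphToDeltaInj.op

/-- The data of an `(n+1)`-clique (with chosen edges) in a directed graph
`Y : Δ_G^op ⥤ Set`: vertices `x 0, …, x n` together with, for each `i < j`,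
a chosen edge with source `x i` and target `x j`. -/
structure CliqueData (Y : WalkingParallelPairᵒᵖ ⥤ Type) (n : ℕ) : Type where
  x : Fin (n + 1) → Y.obj (Opposite.op WalkingParallelPair.zero)
  e : ∀ i j : Fin (n + 1), i < j → Y.obj (Opposite.op WalkingParallelPair.one)
  src : ∀ (i j : Fin (n + 1)) (h : i < j),
    Y.map (Quiver.Hom.op WalkingParallelPairHom.left) (e i j h) = x i
  tgt : ∀ (i j : Fin (n + 1)) (h : i < j),
    Y.map (Quiver.Hom.op WalkingParallelPairHom.right) (e i j h) = x j

/-!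
By Yoneda and the adjunction, `∀_h(Y)[n] ≃ (y[n] ⟶ ∀_h Y) ≃ (R_h y[n] ⟶ Y)`. The graph
`R_h y[n]` has as vertices the maps `[0] → [n]`, i.e. the points `0, …, n`, and as edges the
strictly increasing maps `[1] → [n]`, i.e. the pairs `i < j`, with source `i` and target `j`.
A graph morphism out of it is therefore exactly a clique with chosen edges in `Y`.
-/

open WalkingParallelPair WalkingParallelPairHom Opposite

def graphHomMk {P Y : WalkingParallelPairᵒᵖ ⥤ Type}
    (fV : P.obj (op zero) → Y.obj (op zero)) (fE : P.obj (op one) → Y.obj (op one))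
    (map_src : ∀ e, Y.map (Quiver.Hom.op left) (fE e) = fV (P.map (Quiver.Hom.op left) e))
    (map_tgt : ∀ e, Y.map (Quiver.Hom.op right) (fE e) = fV (P.map (Quiver.Hom.op right) e)) :
    P ⟶ Y where
  app
    | op zero => TypeCat.ofHom fV
    | op one => TypeCat.ofHom fE
  naturality := by
    rintro ⟨_⟩ ⟨_⟩ ⟨f⟩
    change WalkingParallelPairHom _ _ at f
    cases f
    · ext e; exact (map_src e).symm
    · ext e; exact (map_tgt e).symm
    · ext x; exact (congrArg _ (P.map_id_apply _ x)).trans (Y.map_id_apply _ _).symm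

def simplexGraph (n : ℕ) : WalkingParallelPairᵒᵖ ⥤ Type :=
  Rh.obj (yoneda.obj (show DeltaInj from n))

namespace simplexGraph

variable (n : ℕ)

def vertexEquiv : (simplexGraph n).obj (op zero) ≃ Fin (n + 1) where
  toFun v := (show { f : Fin 1 → Fin (n + 1) // StrictMono f } from v).1 0
  invFun i := show { f : Fin 1 → Fin (n + 1) // StrictMono f } from
    ⟨fun _ => i, Subsingleton.strictMono _⟩
  left_inv _ := Subtype.ext (funext fun k => by fin_cases k; rfl)
  right_inv _ := rfl

def edgeEquiv :
    (simplexGraph n).obj (op one) ≃ { p : Fin (n + 1) × Fin (n + 1) // p.1 < p.2 } where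
  toFun e :=
    let f : { f : Fin 2 → Fin (n + 1) // StrictMono f } := e
    ⟨(f.1 0, f.1 1), f.2 Fin.zero_lt_one⟩
  invFun p := show { f : Fin 2 → Fin (n + 1) // StrictMono f } from
    ⟨![p.1.1, p.1.2], Fin.strictMono_iff_lt_succ.2 fun i => by fin_cases i; exact p.2⟩
  left_inv _ := Subtype.ext (funext fun k => by fin_cases k <;> rfl)
  right_inv _ := rfl

lemma map_left_edgeEquiv_symm (p : { p : Fin (n + 1) × Fin (n + 1) // p.1 < p.2 }) :
    (simplexGraph n).map (Quiver.Hom.op left) ((edgeEquiv n).symm p) =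
      (vertexEquiv n).symm p.1.1 :=
  Subtype.ext (funext fun k => by fin_cases k; rfl)

lemma map_right_edgeEquiv_symm (p : { p : Fin (n + 1) × Fin (n + 1) // p.1 < p.2 }) :
    (simplexGraph n).map (Quiver.Hom.op right) ((edgeEquiv n).symm p) =
      (vertexEquiv n).symm p.1.2 :=
  Subtype.ext (funext fun k => by fin_cases k; rfl)

def homEquivCliqueData (Y : WalkingParallelPairᵒᵖ ⥤ Type) :
    (simplexGraph n ⟶ Y) ≃ CliqueData Y n where
  toFun α :=
    { x i := α.app (op zero) ((vertexEquiv n).symm i)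
      e i j h := α.app (op one) ((edgeEquiv n).symm ⟨(i, j), h⟩)
      src i j h := by rw [← NatTrans.naturality_apply, map_left_edgeEquiv_symm]
      tgt i j h := by rw [← NatTrans.naturality_apply, map_right_edgeEquiv_symm] }
  invFun c := graphHomMk (fun v => c.x (vertexEquiv n v)) (fun e => c.e _ _ (edgeEquiv n e).2)
    (fun _ => c.src _ _ _) (fun _ => c.tgt _ _ _)
  left_inv α := by
    ext ⟨_ | _⟩ x
    · exact congrArg (α.app _) ((vertexEquiv n).symm_apply_apply x)
    · exact congrArg (α.app _) ((edgeEquiv n).symm_apply_apply x)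
  right_inv _ := rfl

end simplexGraph

/-- For any right adjoint `∀_h` of the restriction functor `R_h` and any directed graph
`Y : Δ_G^op ⥤ Set`, the set of `n`-simplices of `∀_h(Y)`, i.e. its value at `[n]`, is in
bijection with the set of `(n+1)`-cliques with chosen edges in `Y`. -/
theorem right_adjoint_value_is_cliques
    (Ra : (WalkingParallelPairᵒᵖ ⥤ Type) ⥤ (DeltaInjᵒᵖ ⥤ Type)) (adj : Rh ⊣ Ra)
    (Y : WalkingParallelPairᵒᵖ ⥤ Type) (n : ℕ) :
    Nonempty ((Ra.obj Y).obj (Opposite.op (show DeltaInj from n)) ≃ CliqueData Y n) :=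
  ⟨yonedaEquiv.symm.trans ((adj.homEquiv _ Y).symm.trans (simplexGraph.homEquivCliqueData n Y))⟩
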